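/- Let m, n be positive integers, C ∈ ℝ^{m×n}, ε > 0, and K_{ij} = exp(-C_{ij}/ε). Let a ∈ ℝ^m have strictly positive entries, let b^d, b^u ∈ ℝ^n satisfy 0 ≤ b^d ≤ b^u entrywise, and suppose C(a,b^u,b^d) is nonempty. Define the dual functional L(f,g,h) = ⟨f,a⟩ + ⟨g,b^d⟩ + ⟨h,b^u⟩ - ε·Σ_{ij} exp(f_i/ε)·K_{ij}·exp((g_j+h_j)/ε) for f ∈ ℝ^m, g ∈ ℝ^n, h ∈ ℝ^n. Then min over P ∈ C(a,b^u,b^d) of ⟨C,P⟩ - εH(P) equals the supremum of L(f,g,h) over all f ∈ ℝ^m, g ∈ ℝ^n with g ≥ 0 entrywise, and h ∈ ℝ^n with h ≤ 0 entrywise. -/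

import Mathlib

/-!
By compactness the primal problem has a minimizer `P`. Since `x (log x - 1)` has slope `-∞` at `0`,
no feasible perturbation of `P` can charge an entry where `P` vanishes; moving mass around
`2 × 2` cycles (possible because every row carries mass `a i > 0`) then shows that `P` is positive
on every column it charges. First-order conditions for these cycles and for transfers within a row
give `C i j + ε log P i j = f i + g j + h j` on the support, with `g ≥ 0` and `h ≤ 0`
complementary to the column bounds. By the Fenchel–Young inequality
`x s ≤ x (log x - 1) + exp s`, the remaining duality gap is the sum of
`ε exp ((f i + g j + h j - C i j) / ε)` over the uncharged columns, and shifting the multipliers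
a distance `T` along a recession direction of the dual multiplies it by `exp (-T / ε)`.
-/

open Real Finset Filter Topology

noncomputable section

namespace EntropicOT

def entropicTerm (c ε x : ℝ) : ℝ := c * x + ε * (x * (log x - 1))

def fenchelGap (x s : ℝ) : ℝ := x * (log x - 1) - x * s + exp s

lemma entropicTerm_zero (c ε : ℝ) : entropicTerm c ε 0 = 0 := by simp [entropicTerm]

lemma entropicTerm_mul {t v : ℝ} (c ε : ℝ) (ht : 0 < t) (hv : 0 < v) :
    entropicTerm c ε (t * v) = t * entropicTerm c ε v + ε * t * v * log t := by
  rw [entropicTerm, entropicTerm, log_mul ht.ne' hv.ne']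
  ring

lemma continuous_entropicTerm (c ε : ℝ) : Continuous (entropicTerm c ε) := by
  have h : entropicTerm c ε = fun x => c * x + ε * (x * log x - x) := by
    funext x
    rw [entropicTerm, mul_sub, mul_one]
  rw [h]
  exact (continuous_const.mul continuous_id).add
    (continuous_const.mul (continuous_mul_log.sub continuous_id))

lemma convexOn_entropicTerm (c : ℝ) {ε : ℝ} (hε : 0 ≤ ε) :
    ConvexOn ℝ (Set.Ici 0) (entropicTerm c ε) := by
  have hlin : ConvexOn ℝ (Set.Ici (0 : ℝ)) fun x => (c - ε) * x :=
    (LinearMap.mulLeft ℝ (c - ε)).convexOn (convex_Ici 0)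
  refine ((convexOn_mul_log.smul hε).add hlin).congr fun x _ => ?_
  simp only [Pi.add_apply, smul_eq_mul, entropicTerm]
  ring

lemma hasDerivAt_entropicTerm (c ε : ℝ) {x : ℝ} (hx : x ≠ 0) :
    HasDerivAt (entropicTerm c ε) (c + ε * log x) x := by
  have h := ((hasDerivAt_id x).const_mul c).add
    (((hasDerivAt_mul_log hx).sub (hasDerivAt_id x)).const_mul ε)
  refine (h.congr_deriv (by ring)).congr_of_eventuallyEq (.of_forall fun y => ?_)
  simp only [entropicTerm, Pi.add_apply, Pi.sub_apply, id]
  ring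

lemma fenchelGap_nonneg {x : ℝ} (s : ℝ) (hx : 0 ≤ x) : 0 ≤ fenchelGap x s := by
  rcases hx.eq_or_lt with rfl | hx
  · simp [fenchelGap, (exp_pos s).le]
  · have h := add_one_le_exp (s - log x)
    rw [exp_sub, exp_log hx, le_div_iff₀ hx] at h
    unfold fenchelGap
    nlinarith

lemma fenchelGap_log {x : ℝ} (hx : 0 < x) : fenchelGap x (log x) = 0 := by
  simp [fenchelGap, exp_log hx]; ring

lemma fenchelGap_zero (s : ℝ) : fenchelGap 0 s = exp s := by simp [fenchelGap]

lemma nonneg_of_hasDerivAt_of_eventually_le {ψ : ℝ → ℝ} {L : ℝ} (hψ : HasDerivAt ψ L 0)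
    (hmin : ∀ᶠ δ in 𝓝[>] 0, ψ 0 ≤ ψ δ) : 0 ≤ L := by
  refine ge_of_tendsto ((hasDerivWithinAt_iff_tendsto_slope' (s := Set.Ioi 0)
    (lt_irrefl 0)).1 hψ.hasDerivWithinAt) ?_
  filter_upwards [hmin, self_mem_nhdsWithin] with δ hδ (hδ0 : 0 < δ)
  rw [slope_def_field, sub_zero]
  exact div_nonneg (sub_nonneg.2 hδ) hδ0.le

lemma eventually_le_add_mul {c x s : ℝ} (hx : c ≤ x) (hs : s < 0 → c < x) :
    ∀ᶠ δ in 𝓝[>] (0 : ℝ), c ≤ x + δ * s := by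
  rcases le_or_gt 0 s with hs₀ | hs₀
  · filter_upwards [self_mem_nhdsWithin] with δ (hδ : 0 < δ)
    nlinarith
  · have hlim : Tendsto (fun δ : ℝ => x + δ * s) (𝓝 0) (𝓝 x) := by
      simpa using (tendsto_const_nhds (x := x)).add ((tendsto_id (x := 𝓝 (0 : ℝ))).mul_const s)
    exact nhdsWithin_le_nhds ((hlim.eventually_const_lt (hs hs₀)).mono fun δ h => h.le)

lemma exists_pos_of_sum_pos {ι : Type*} [Fintype ι] {f : ι → ℝ} (h : 0 < ∑ i, f i) :
    ∃ i, 0 < f i := by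
  obtain ⟨i, -, hi⟩ := exists_lt_of_sum_lt (s := univ) (f := fun _ => (0 : ℝ)) (by simpa using h)
  exact ⟨i, hi⟩

lemma exists_eq_add_of_four_point {ι κ : Type*} {G : ι → κ → ℝ} {J : κ → Prop}
    (hG : ∀ i i' j k, J j → J k → G i j + G i' k = G i k + G i' j) :
    ∃ (u : ι → ℝ) (v : κ → ℝ), ∀ i j, J j → G i j = u i + v j := by
  by_cases h : Nonempty ι ∧ ∃ k, J k
  · obtain ⟨⟨i₀⟩, k, hk⟩ := h
    refine ⟨fun i => G i k - G i₀ k, fun j => G i₀ j, fun i j hj => ?_⟩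
    linarith [hG i i₀ j k hj hk]
  · refine ⟨0, 0, fun i j hj => (h ⟨⟨i⟩, j, hj⟩).elim⟩

lemma exists_between_of_forall_le {κ : Type*} [Finite κ] (v : κ → ℝ) {p q : κ → Prop}
    (h : ∀ j k, p j → q k → v k ≤ v j) :
    ∃ c, (∀ j, p j → c ≤ v j) ∧ ∀ k, q k → v k ≤ c := by
  by_cases hq : ∃ k, q k
  · obtain ⟨k₀, hk₀⟩ := hq
    have hbdd : BddAbove (v '' {k | q k}) := (Set.toFinite _).bddAbove
    refine ⟨sSup (v '' {k | q k}), fun j hj => csSup_le ⟨v k₀, k₀, hk₀, rfl⟩ ?_,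
      fun k hk => le_csSup hbdd ⟨k, hk, rfl⟩⟩
    rintro _ ⟨k, hk, rfl⟩
    exact h j k hj hk
  · have hbdd : BddBelow (v '' {j | p j}) := (Set.toFinite _).bddBelow
    exact ⟨sInf (v '' {j | p j}), fun j hj => csInf_le hbdd ⟨j, hj, rfl⟩,
      fun k hk => (hq ⟨k, hk⟩).elim⟩

variable {ι κ : Type*}

section EntropicCost

variable [Fintype ι] [Fintype κ]

def entropy (P : Matrix ι κ ℝ) : ℝ := -∑ i, ∑ j, P i j * (log (P i j) - 1)

def entropicCost (C : Matrix ι κ ℝ) (ε : ℝ) (P : Matrix ι κ ℝ) : ℝ :=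
  (∑ i, ∑ j, C i j * P i j) - ε * entropy P

def entropicCostGrad (C : Matrix ι κ ℝ) (ε : ℝ) (P : Matrix ι κ ℝ) : Matrix ι κ ℝ :=
  fun i j => C i j + ε * log (P i j)

variable {C P Q d : Matrix ι κ ℝ} {ε : ℝ}

lemma entropicCost_eq_sum (C : Matrix ι κ ℝ) (ε : ℝ) (P : Matrix ι κ ℝ) :
    entropicCost C ε P = ∑ i, ∑ j, entropicTerm (C i j) ε (P i j) := by
  simp only [entropicCost, entropy, entropicTerm, mul_neg, sub_neg_eq_add, mul_sum,
    ← sum_add_distrib]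

lemma continuous_entropicCost (C : Matrix ι κ ℝ) (ε : ℝ) : Continuous (entropicCost C ε) := by
  simp_rw [funext (entropicCost_eq_sum C ε)]
  refine continuous_finsetSum _ fun i _ => continuous_finsetSum _ fun j _ => ?_
  exact (continuous_entropicTerm _ _).comp ((continuous_apply j).comp (continuous_apply i))

lemma hasDerivAt_entropicCost_add_smul (hd : ∀ i j, d i j ≠ 0 → 0 < P i j) :
    HasDerivAt (fun δ : ℝ => entropicCost C ε (P + δ • d))
      (∑ i, ∑ j, d i j * entropicCostGrad C ε P i j) 0 := by
  simp only [entropicCost_eq_sum, Matrix.add_apply, Matrix.smul_apply, smul_eq_mul]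
  refine HasDerivAt.fun_sum fun i _ => HasDerivAt.fun_sum fun j _ => ?_
  by_cases hdij : d i j = 0
  · simpa [hdij] using hasDerivAt_const (0 : ℝ) (entropicTerm (C i j) ε (P i j))
  · have hline : HasDerivAt (fun δ : ℝ => P i j + δ * d i j) (d i j) 0 := by
      simpa using ((hasDerivAt_id (0 : ℝ)).mul_const (d i j)).const_add (P i j)
    have hφ := hasDerivAt_entropicTerm (C i j) ε (hd i j hdij).ne'
    rw [← add_zero (P i j), ← zero_mul (d i j)] at hφ
    refine (hφ.comp 0 hline).congr_deriv ?_
    simp [entropicCostGrad, mul_comm]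

lemma entropicCost_segment_le (hε : 0 ≤ ε) (hP : ∀ i j, 0 ≤ P i j) (hQ : ∀ i j, 0 ≤ Q i j)
    {t : ℝ} (ht₀ : 0 < t) (ht₁ : t ≤ 1) {i₀ : ι} {j₀ : κ} (hP₀ : P i₀ j₀ = 0)
    (hQ₀ : 0 < Q i₀ j₀) :
    entropicCost C ε ((1 - t) • P + t • Q) ≤
      (1 - t) * entropicCost C ε P + t * entropicCost C ε Q + ε * t * Q i₀ j₀ * log t := by
  set D : ι → κ → ℝ := fun i j => (1 - t) * entropicTerm (C i j) ε (P i j) +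
    t * entropicTerm (C i j) ε (Q i j) - entropicTerm (C i j) ε ((1 - t) * P i j + t * Q i j)
  have hD : ∀ i j, 0 ≤ D i j := fun i j => sub_nonneg.2 <|
    ((convexOn_entropicTerm (C i j) hε).2 (hP i j) (hQ i j) (sub_nonneg.2 ht₁) ht₀.le
      (by ring)).trans_eq (by simp only [smul_eq_mul])
  have hD₀ : D i₀ j₀ = -(ε * t * Q i₀ j₀ * log t) := by
    simp only [D, hP₀, entropicTerm_zero, mul_zero, zero_add, entropicTerm_mul _ _ ht₀ hQ₀]
    ring
  have hsum : D i₀ j₀ ≤ ∑ i, ∑ j, D i j :=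
    (single_le_sum (fun j _ => hD i₀ j) (mem_univ j₀)).trans
      (single_le_sum (fun i _ => sum_nonneg fun j _ => hD i j) (mem_univ i₀))
  simp only [D, sum_sub_distrib, sum_add_distrib, ← mul_sum] at hsum
  simp only [entropicCost_eq_sum, Matrix.add_apply, Matrix.smul_apply, smul_eq_mul]
  linarith

end EntropicCost

section Minimizer

variable [Fintype ι] [Fintype κ] {S : Set (Matrix ι κ ℝ)} {C P Q d : Matrix ι κ ℝ} {ε : ℝ}

lemma grad_pairing_nonneg_of_isMinOn (hmin : IsMinOn (entropicCost C ε) S P)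
    (hd : ∀ i j, d i j ≠ 0 → 0 < P i j) (hfeas : ∀ᶠ δ in 𝓝[>] (0 : ℝ), P + δ • d ∈ S) :
    0 ≤ ∑ i, ∑ j, d i j * entropicCostGrad C ε P i j :=
  nonneg_of_hasDerivAt_of_eventually_le (hasDerivAt_entropicCost_add_smul hd)
    (hfeas.mono fun δ hδ => by simpa using hmin hδ)

lemma entry_eq_zero_of_isMinOn (hε : 0 < ε) (hS : Convex ℝ S) (hS₀ : ∀ Q ∈ S, ∀ i j, 0 ≤ Q i j)
    (hmin : IsMinOn (entropicCost C ε) S P) (hP : P ∈ S) (hQ : Q ∈ S) {i₀ : ι} {j₀ : κ}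
    (hP₀ : P i₀ j₀ = 0) : Q i₀ j₀ = 0 := by
  refine le_antisymm (not_lt.1 fun hQ₀ => ?_) (hS₀ Q hQ i₀ j₀)
  have hlog : ∀ᶠ t in 𝓝[>] 0,
      ε * Q i₀ j₀ * log t < entropicCost C ε P - entropicCost C ε Q :=
    (tendsto_log_nhdsGT_zero.const_mul_atBot (mul_pos hε hQ₀)).eventually_lt_atBot _
  have hlt₁ : ∀ᶠ t in 𝓝[>] (0 : ℝ), t < 1 := nhdsWithin_le_nhds (eventually_lt_nhds one_pos)
  obtain ⟨t, hlt, ht₁, ht₀ : 0 < t⟩ := (hlog.and (hlt₁.and self_mem_nhdsWithin)).exists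
  have hmin_t : entropicCost C ε P ≤ entropicCost C ε ((1 - t) • P + t • Q) :=
    hmin (hS hP hQ (sub_nonneg.2 ht₁.le) ht₀.le (by ring))
  have hseg := entropicCost_segment_le (C := C) hε.le (hS₀ P hP) (hS₀ Q hQ) ht₀ ht₁.le hP₀ hQ₀
  nlinarith [mul_lt_mul_of_pos_left hlt ht₀]

lemma entry_pos_of_isMinOn (hε : 0 < ε) (hS : Convex ℝ S) (hS₀ : ∀ Q ∈ S, ∀ i j, 0 ≤ Q i j)
    (hmin : IsMinOn (entropicCost C ε) S P) (hP : P ∈ S) {i : ι} {j : κ} (hd : 0 < d i j)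
    (hfeas : ∀ᶠ δ in 𝓝[>] (0 : ℝ), P + δ • d ∈ S) : 0 < P i j := by
  refine (hS₀ P hP i j).lt_of_ne' fun hP₀ => ?_
  obtain ⟨δ, hδS, hδ : 0 < δ⟩ := (hfeas.and self_mem_nhdsWithin).exists
  have := entry_eq_zero_of_isMinOn hε hS hS₀ hmin hP hδS hP₀
  simp only [Matrix.add_apply, Matrix.smul_apply, smul_eq_mul, hP₀, zero_add] at this
  exact (mul_pos hδ hd).ne' this

end Minimizer

section Couplings

variable [Fintype ι] [Fintype κ]

def dbCouplings (a : ι → ℝ) (bd bu : κ → ℝ) : Set (Matrix ι κ ℝ) :=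
  {P | (∀ i j, 0 ≤ P i j) ∧ (∀ i, ∑ j, P i j = a i) ∧ (∀ j, bd j ≤ ∑ i, P i j) ∧
    (∀ j, ∑ i, P i j ≤ bu j)}

variable {a : ι → ℝ} {bd bu : κ → ℝ} {P d : Matrix ι κ ℝ}

lemma convex_dbCouplings : Convex ℝ (dbCouplings a bd bu) := by
  rintro P ⟨hP₀, hPr, hPd, hPu⟩ Q ⟨hQ₀, hQr, hQd, hQu⟩ s t hs ht hst
  have hcol : ∀ j, ∑ i, (s • P + t • Q) i j = s * ∑ i, P i j + t * ∑ i, Q i j := by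
    simp [sum_add_distrib, mul_sum]
  refine ⟨fun i j => ?_, fun i => ?_, fun j => ?_, fun j => ?_⟩
  · simpa using add_nonneg (mul_nonneg hs (hP₀ i j)) (mul_nonneg ht (hQ₀ i j))
  · simp [sum_add_distrib, ← mul_sum, hPr, hQr, ← add_mul, hst]
  · rw [hcol, ← one_mul (bd j), ← hst, add_mul]
    exact add_le_add (mul_le_mul_of_nonneg_left (hPd j) hs) (mul_le_mul_of_nonneg_left (hQd j) ht)
  · rw [hcol, ← one_mul (bu j), ← hst, add_mul]
    exact add_le_add (mul_le_mul_of_nonneg_left (hPu j) hs) (mul_le_mul_of_nonneg_left (hQu j) ht)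

lemma isClosed_dbCouplings : IsClosed (dbCouplings a bd bu) := by
  simp only [dbCouplings, Set.ofPred_and, Set.ofPred_forall]
  refine .inter (isClosed_iInter fun i => isClosed_iInter fun j => ?_) (.inter
    (isClosed_iInter fun i => ?_) (.inter (isClosed_iInter fun j => ?_)
      (isClosed_iInter fun j => ?_)))
  · exact isClosed_le continuous_const (by fun_prop)
  · exact isClosed_eq (by fun_prop) continuous_const
  · exact isClosed_le continuous_const (by fun_prop)
  · exact isClosed_le (by fun_prop) continuous_const

lemma isCompact_dbCouplings : IsCompact (dbCouplings a bd bu) := by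
  refine (isCompact_univ_pi fun i => isCompact_univ_pi fun _ => isCompact_Icc (a := 0)
    (b := a i)).of_isClosed_subset isClosed_dbCouplings ?_
  rintro P ⟨hP₀, hPr, -, -⟩ i - j -
  exact ⟨hP₀ i j, hPr i ▸ single_le_sum (fun j _ => hP₀ i j) (mem_univ j)⟩

lemma le_colSum_of_mem_dbCouplings (hP : P ∈ dbCouplings a bd bu) (i : ι) (j : κ) :
    P i j ≤ ∑ p, P p j :=
  single_le_sum (fun p _ => hP.1 p j) (mem_univ i)

lemma eventually_add_smul_mem_dbCouplings (hP : P ∈ dbCouplings a bd bu)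
    (hneg : ∀ i j, d i j < 0 → 0 < P i j) (hrow : ∀ i, ∑ j, d i j = 0)
    (hup : ∀ j, 0 < ∑ i, d i j → ∑ i, P i j < bu j)
    (hlow : ∀ j, ∑ i, d i j < 0 → bd j < ∑ i, P i j) :
    ∀ᶠ δ in 𝓝[>] (0 : ℝ), P + δ • d ∈ dbCouplings a bd bu := by
  obtain ⟨hP₀, hPr, hPd, hPu⟩ := hP
  have hcol : ∀ (δ : ℝ) j, ∑ i, (P + δ • d) i j = ∑ i, P i j + δ * ∑ i, d i j := by
    simp [sum_add_distrib, mul_sum]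
  have hentries : ∀ᶠ δ in 𝓝[>] (0 : ℝ), ∀ i j, 0 ≤ (P + δ • d) i j := by
    simp only [eventually_all]
    exact fun i j => by simpa using eventually_le_add_mul (hP₀ i j) (hneg i j)
  have hlower : ∀ᶠ δ in 𝓝[>] (0 : ℝ), ∀ j, bd j ≤ ∑ i, (P + δ • d) i j := by
    simp only [eventually_all, hcol]
    exact fun j => eventually_le_add_mul (hPd j) (hlow j)
  have hupper : ∀ᶠ δ in 𝓝[>] (0 : ℝ), ∀ j, ∑ i, (P + δ • d) i j ≤ bu j := by
    simp only [eventually_all, hcol]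
    refine fun j => (eventually_le_add_mul (c := -bu j) (s := -∑ i, d i j) (neg_le_neg (hPu j))
      fun h => neg_lt_neg (hup j (neg_neg_iff_pos.1 h))).mono fun δ h => ?_
    linarith
  filter_upwards [hentries, hlower, hupper] with δ h₀ hd hu
  refine ⟨h₀, fun i => ?_, hd, hu⟩
  simp [sum_add_distrib, ← mul_sum, hrow, hPr]

end Couplings

section Transfer

variable [DecidableEq ι] [DecidableEq κ]

def transfer (i : ι) (j k : κ) : Matrix ι κ ℝ := Matrix.single i j 1 - Matrix.single i k 1

variable {i p : ι} {j k q : κ}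

lemma sum_transfer_row [Fintype κ] (i p : ι) (j k : κ) : ∑ q, transfer i j k p q = 0 := by
  simp [transfer, Matrix.single_apply, ite_and]

lemma sum_transfer_col [Fintype ι] (i : ι) (j k q : κ) :
    ∑ p, transfer i j k p q = (if q = j then 1 else 0) - (if q = k then 1 else 0) := by
  simp [transfer, Matrix.single_apply, ite_and, eq_comm]

lemma sum_transfer_mul [Fintype ι] [Fintype κ] (G : Matrix ι κ ℝ) :
    ∑ p, ∑ q, transfer i j k p q * G p q = G i j - G i k := by
  simp [transfer, Matrix.single_apply, sub_mul, sum_sub_distrib, ite_and]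

lemma transfer_apply_self (h : j ≠ k) : transfer i j k i j = 1 := by
  simp [transfer, h.symm]

lemma of_transfer_apply_neg (h : transfer i j k p q < 0) : p = i ∧ q = k := by
  simp only [transfer, Matrix.sub_apply, Matrix.single_apply] at h
  split_ifs at h <;> grind

lemma of_transfer_apply_pos (h : 0 < transfer i j k p q) : p = i ∧ q = j := by
  simp only [transfer, Matrix.sub_apply, Matrix.single_apply] at h
  split_ifs at h <;> grind

lemma of_transfer_apply_ne_zero (h : transfer i j k p q ≠ 0) : p = i ∧ (q = j ∨ q = k) := by
  rcases h.lt_or_gt with h | h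
  · exact (of_transfer_apply_neg h).imp_right Or.inr
  · exact (of_transfer_apply_pos h).imp_right Or.inl

end Transfer

section TransferFeasibility

variable [Fintype ι] [Fintype κ] [DecidableEq ι] [DecidableEq κ] {a : ι → ℝ} {bd bu : κ → ℝ}
  {P : Matrix ι κ ℝ} {i : ι} {j k : κ}

lemma eventually_add_smul_transfer_mem (hP : P ∈ dbCouplings a bd bu) (hik : 0 < P i k)
    (hj : ∑ p, P p j < bu j) (hk : bd k < ∑ p, P p k) :
    ∀ᶠ δ in 𝓝[>] (0 : ℝ), P + δ • transfer i j k ∈ dbCouplings a bd bu := by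
  refine eventually_add_smul_mem_dbCouplings hP (fun p q h => ?_) (sum_transfer_row i · j k)
    (fun q h => ?_) (fun q h => ?_)
  · obtain ⟨rfl, rfl⟩ := of_transfer_apply_neg h
    exact hik
  · rw [sum_transfer_col] at h
    split_ifs at h <;> subst_vars <;> first | assumption | norm_num at h
  · rw [sum_transfer_col] at h
    split_ifs at h <;> subst_vars <;> first | assumption | norm_num at h

lemma eventually_add_smul_cycle_mem {i' : ι} (hP : P ∈ dbCouplings a bd bu) (hik : 0 < P i k)
    (hi'j : 0 < P i' j) :
    ∀ᶠ δ in 𝓝[>] (0 : ℝ), P + δ • (transfer i j k - transfer i' j k) ∈ dbCouplings a bd bu := by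
  refine eventually_add_smul_mem_dbCouplings hP (fun p q h => ?_)
    (fun p => by simp [sum_sub_distrib, sum_transfer_row]) (fun q h => ?_) (fun q h => ?_)
  · rw [Matrix.sub_apply, sub_neg] at h
    rcases lt_or_ge (transfer i j k p q) 0 with h' | h'
    · obtain ⟨rfl, rfl⟩ := of_transfer_apply_neg h'
      exact hik
    · obtain ⟨rfl, rfl⟩ := of_transfer_apply_pos (h'.trans_lt h)
      exact hi'j
  · simp [sum_sub_distrib, sum_transfer_col] at h
  · simp [sum_sub_distrib, sum_transfer_col] at h

end TransferFeasibility

section ComplementaryMultiplier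

variable [Fintype ι]

def IsComplementaryMultiplier (P : Matrix ι κ ℝ) (bd bu g h : κ → ℝ) : Prop :=
  ∀ j, 0 ≤ g j ∧ h j ≤ 0 ∧ g j * (∑ i, P i j - bd j) = 0 ∧ h j * (∑ i, P i j - bu j) = 0

variable {P : Matrix ι κ ℝ} {bd bu g h : κ → ℝ}

lemma IsComplementaryMultiplier.add_smul {γ η : κ → ℝ}
    (hgh : IsComplementaryMultiplier P bd bu g h)
    (hγη : IsComplementaryMultiplier P bd bu γ η) {T : ℝ} (hT : 0 ≤ T) :
    IsComplementaryMultiplier P bd bu (g + T • γ) (h + T • η) := fun j => by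
  obtain ⟨hg, hh, hgs, hhs⟩ := hgh j
  obtain ⟨hγ, hη, hγs, hηs⟩ := hγη j
  refine ⟨add_nonneg hg (mul_nonneg hT hγ), add_nonpos hh (mul_nonpos_of_nonneg_of_nonpos hT hη),
    ?_, ?_⟩
  · simp only [Pi.add_apply, Pi.smul_apply, smul_eq_mul, add_mul, hgs, mul_assoc, hγs]
    ring
  · simp only [Pi.add_apply, Pi.smul_apply, smul_eq_mul, add_mul, hhs, mul_assoc, hηs]
    ring

end ComplementaryMultiplier

section Optimality

variable [Fintype ι] [Fintype κ] [DecidableEq ι] [DecidableEq κ] {C P : Matrix ι κ ℝ} {ε : ℝ}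
  {a : ι → ℝ} {bd bu : κ → ℝ} {i i' : ι} {j k : κ}

lemma grad_le_of_isMinOn (hP : P ∈ dbCouplings a bd bu)
    (hmin : IsMinOn (entropicCost C ε) (dbCouplings a bd bu) P) (hij : 0 < P i j)
    (hik : 0 < P i k) (hj : ∑ p, P p j < bu j) (hk : bd k < ∑ p, P p k) :
    entropicCostGrad C ε P i k ≤ entropicCostGrad C ε P i j := by
  have h := grad_pairing_nonneg_of_isMinOn hmin
    (fun p q hpq => by obtain ⟨rfl, rfl | rfl⟩ := of_transfer_apply_ne_zero hpq <;> assumption)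
    (eventually_add_smul_transfer_mem hP hik hj hk)
  rw [sum_transfer_mul] at h
  linarith

lemma grad_add_grad_le_of_isMinOn (hP : P ∈ dbCouplings a bd bu)
    (hmin : IsMinOn (entropicCost C ε) (dbCouplings a bd bu) P) (hij : 0 < P i j)
    (hik : 0 < P i k) (hi'j : 0 < P i' j) (hi'k : 0 < P i' k) :
    entropicCostGrad C ε P i k + entropicCostGrad C ε P i' j ≤
      entropicCostGrad C ε P i j + entropicCostGrad C ε P i' k := by
  have hsupp : ∀ p q, (transfer i j k - transfer i' j k) p q ≠ 0 → 0 < P p q := by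
    intro p q hpq
    rw [Matrix.sub_apply, sub_ne_zero] at hpq
    by_cases h : transfer i j k p q = 0
    · obtain ⟨rfl, rfl | rfl⟩ := of_transfer_apply_ne_zero (h ▸ hpq.symm) <;> assumption
    · obtain ⟨rfl, rfl | rfl⟩ := of_transfer_apply_ne_zero h <;> assumption
  have h := grad_pairing_nonneg_of_isMinOn hmin hsupp (eventually_add_smul_cycle_mem hP hik hi'j)
  simp only [Matrix.sub_apply, sub_mul, sum_sub_distrib, sum_transfer_mul] at h
  linarith

lemma grad_four_point_of_isMinOn (hP : P ∈ dbCouplings a bd bu)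
    (hmin : IsMinOn (entropicCost C ε) (dbCouplings a bd bu) P) (hij : 0 < P i j)
    (hik : 0 < P i k) (hi'j : 0 < P i' j) (hi'k : 0 < P i' k) :
    entropicCostGrad C ε P i j + entropicCostGrad C ε P i' k =
      entropicCostGrad C ε P i k + entropicCostGrad C ε P i' j :=
  le_antisymm (by linarith [grad_add_grad_le_of_isMinOn hP hmin hi'j hi'k hij hik])
    (grad_add_grad_le_of_isMinOn hP hmin hij hik hi'j hi'k)

lemma entry_pos_of_colSum_pos (hε : 0 < ε) (ha : ∀ i, 0 < a i) (hP : P ∈ dbCouplings a bd bu)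
    (hmin : IsMinOn (entropicCost C ε) (dbCouplings a bd bu) P) (hj : 0 < ∑ p, P p j) (i : ι) :
    0 < P i j := by
  obtain ⟨i₁, hi₁⟩ := exists_pos_of_sum_pos hj
  obtain ⟨k, hk⟩ := exists_pos_of_sum_pos ((hP.2.1 i).symm ▸ ha i)
  rcases eq_or_ne i i₁ with rfl | hii₁
  · exact hi₁
  rcases eq_or_ne j k with rfl | hjk
  · exact hk
  refine entry_pos_of_isMinOn hε convex_dbCouplings (fun Q hQ => hQ.1) hmin hP ?_
    (eventually_add_smul_cycle_mem hP hk hi₁)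
  simp [transfer, hii₁.symm, hjk.symm]

lemma colSum_dichotomy_of_isMinOn (hε : 0 < ε) (hP : P ∈ dbCouplings a bd bu)
    (hmin : IsMinOn (entropicCost C ε) (dbCouplings a bd bu) P) :
    (∀ j, ∑ i, P i j = 0 → bu j = 0) ∨ ∀ j, 0 < ∑ i, P i j → ∑ i, P i j = bd j := by
  by_contra! h
  obtain ⟨⟨j, hj₀, hbu⟩, k, hk₀, hk⟩ := h
  have hbu_nonneg : 0 ≤ bu j := hj₀ ▸ hP.2.2.2 j
  have hbu_pos : ∑ i, P i j < bu j := hj₀ ▸ hbu_nonneg.lt_of_ne' hbu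
  obtain ⟨i, hi⟩ := exists_pos_of_sum_pos hk₀
  have hjk : j ≠ k := by rintro rfl; linarith
  have hij : 0 < P i j := entry_pos_of_isMinOn hε convex_dbCouplings (fun Q hQ => hQ.1) hmin hP
    (by rw [transfer_apply_self hjk]; exact one_pos)
    (eventually_add_smul_transfer_mem hP hi hbu_pos ((hP.2.2.1 k).lt_of_ne hk.symm))
  linarith [le_colSum_of_mem_dbCouplings hP i j]

lemma exists_potentials_of_isMinOn (hε : 0 < ε) (ha : ∀ i, 0 < a i)
    (hP : P ∈ dbCouplings a bd bu) (hmin : IsMinOn (entropicCost C ε) (dbCouplings a bd bu) P) :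
    ∃ (u : ι → ℝ) (w : κ → ℝ),
      (∀ i j, 0 < P i j → entropicCostGrad C ε P i j = u i + w j) ∧
      (∀ j, 0 < w j → ∑ i, P i j = bd j) ∧ ∀ j, w j < 0 → ∑ i, P i j = bu j := by
  have hpos : ∀ {j}, 0 < ∑ i, P i j → ∀ i, 0 < P i j := entry_pos_of_colSum_pos hε ha hP hmin
  obtain ⟨u, v, huv⟩ := exists_eq_add_of_four_point (G := entropicCostGrad C ε P)
    (J := fun j => 0 < ∑ i, P i j) fun i i' j k hj hk =>
      grad_four_point_of_isMinOn hP hmin (hpos hj i) (hpos hk i) (hpos hj i') (hpos hk i')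
  obtain ⟨c, hc_le, hle_c⟩ := exists_between_of_forall_le v
    (p := fun j => 0 < ∑ i, P i j ∧ ∑ i, P i j < bu j)
    (q := fun k => 0 < ∑ i, P i k ∧ bd k < ∑ i, P i k) fun j k ⟨hj, hj'⟩ ⟨hk, hk'⟩ => by
      obtain ⟨i, -⟩ := exists_pos_of_sum_pos hj
      have := grad_le_of_isMinOn hP hmin (hpos hj i) (hpos hk i) hj' hk'
      rw [huv i j hj, huv i k hk] at this
      linarith
  refine ⟨fun i => u i + c, fun j => if 0 < ∑ i, P i j then v j - c else 0,
    fun i j hij => ?_, fun j hw => ?_, fun j hw => ?_⟩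
  · have hj := hij.trans_le (le_colSum_of_mem_dbCouplings hP i j)
    simp only [if_pos hj, huv i j hj]
    ring
  · dsimp only at hw
    split_ifs at hw with hj
    · by_contra hne
      linarith [hle_c j ⟨hj, (hP.2.2.1 j).lt_of_ne (Ne.symm hne)⟩]
    · exact absurd hw (lt_irrefl 0)
  · dsimp only at hw
    split_ifs at hw with hj
    · by_contra hne
      linarith [hc_le j ⟨hj, (hP.2.2.2 j).lt_of_ne hne⟩]
    · exact absurd hw (lt_irrefl 0)

lemma exists_recession_of_isMinOn (hε : 0 < ε) (ha : ∀ i, 0 < a i)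
    (hP : P ∈ dbCouplings a bd bu) (hmin : IsMinOn (entropicCost C ε) (dbCouplings a bd bu) P) :
    ∃ (φ : ι → ℝ) (γ η : κ → ℝ), IsComplementaryMultiplier P bd bu γ η ∧
      ∀ i j, φ i + γ j + η j = if 0 < P i j then 0 else -1 := by
  have hsupp : ∀ i j, 0 < P i j ↔ 0 < ∑ p, P p j := fun i j =>
    ⟨fun h => h.trans_le (le_colSum_of_mem_dbCouplings hP i j),
      fun h => entry_pos_of_colSum_pos hε ha hP hmin h i⟩
  have hzero : ∀ j, ¬ 0 < ∑ p, P p j → ∑ p, P p j = 0 := fun j h =>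
    le_antisymm (not_lt.1 h) (sum_nonneg fun p _ => hP.1 p j)
  simp only [hsupp]
  rcases colSum_dichotomy_of_isMinOn hε hP hmin with hbu | hbd
  · refine ⟨0, 0, fun j => if 0 < ∑ p, P p j then 0 else -1, fun j => ?_, fun i j => by simp⟩
    dsimp only
    split_ifs with hj
    · simp
    · refine ⟨le_rfl, by norm_num, by simp, ?_⟩
      rw [hzero j hj, hbu j (hzero j hj)]
      ring
  · refine ⟨fun _ => -1, fun j => if 0 < ∑ p, P p j then 1 else 0, 0, fun j => ?_,
      fun i j => by dsimp only; split_ifs <;> norm_num⟩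
    dsimp only
    split_ifs with hj
    · refine ⟨zero_le_one, le_rfl, ?_, by simp⟩
      rw [hbd j hj]
      ring
    · simp

lemma exists_complementaryMultiplier_of_isMinOn (hε : 0 < ε) (ha : ∀ i, 0 < a i)
    (hP : P ∈ dbCouplings a bd bu) (hmin : IsMinOn (entropicCost C ε) (dbCouplings a bd bu) P) :
    ∃ (f : ι → ℝ) (g h : κ → ℝ), IsComplementaryMultiplier P bd bu g h ∧
      ∀ i j, 0 < P i j → f i + g j + h j = entropicCostGrad C ε P i j := by
  obtain ⟨u, w, hG, hwd, hwu⟩ := exists_potentials_of_isMinOn hε ha hP hmin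
  refine ⟨u, fun j => max (w j) 0, fun j => min (w j) 0,
    fun j => ⟨le_max_right _ _, min_le_right _ _, ?_, ?_⟩, fun i j hij => ?_⟩ <;> dsimp only
  · rcases lt_or_ge 0 (w j) with hw | hw
    · rw [hwd j hw, sub_self, mul_zero]
    · rw [max_eq_right hw, zero_mul]
  · rcases lt_or_ge (w j) 0 with hw | hw
    · rw [hwu j hw, sub_self, mul_zero]
    · rw [min_eq_right hw, zero_mul]
  · rw [hG i j hij, add_assoc, max_add_min, add_zero]

end Optimality

section Duality

variable [Fintype ι] [Fintype κ]

def dualObjective (C : Matrix ι κ ℝ) (ε : ℝ) (a : ι → ℝ) (bd bu : κ → ℝ) (f : ι → ℝ)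
    (g h : κ → ℝ) : ℝ :=
  (∑ i, f i * a i) + (∑ j, g j * bd j) + (∑ j, h j * bu j) -
    ε * ∑ i, ∑ j, exp (f i / ε) * exp (-(C i j) / ε) * exp ((g j + h j) / ε)

variable {C P : Matrix ι κ ℝ} {ε : ℝ} {a : ι → ℝ} {bd bu : κ → ℝ} {f : ι → ℝ} {g h : κ → ℝ}

lemma entropicCost_sub_dualObjective (hε : ε ≠ 0) (hrow : ∀ i, ∑ j, P i j = a i)
    (f : ι → ℝ) (g h : κ → ℝ) :
    entropicCost C ε P - dualObjective C ε a bd bu f g h =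
      ε * (∑ i, ∑ j, fenchelGap (P i j) ((f i + g j + h j - C i j) / ε)) +
        (∑ j, g j * (∑ i, P i j - bd j)) + ∑ j, h j * (∑ i, P i j - bu j) := by
  have hterm : ∀ i j, ε * fenchelGap (P i j) ((f i + g j + h j - C i j) / ε) =
      entropicTerm (C i j) ε (P i j) - P i j * (f i + g j + h j) +
        ε * (exp (f i / ε) * exp (-(C i j) / ε) * exp ((g j + h j) / ε)) := by
    intro i j
    rw [fenchelGap, entropicTerm, ← exp_add, ← exp_add]
    field_simp
    ring_nf
  have hlin : ∑ i, ∑ j, P i j * (f i + g j + h j) =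
      (∑ i, f i * a i) + (∑ j, g j * ∑ i, P i j) + ∑ j, h j * ∑ i, P i j := by
    simp only [mul_add, sum_add_distrib, mul_sum, ← hrow]
    rw [sum_comm (f := fun i j => P i j * g j), sum_comm (f := fun i j => P i j * h j)]
    simp only [mul_comm]
  simp only [mul_sum, hterm, sum_add_distrib, sum_sub_distrib, hlin, entropicCost_eq_sum,
    dualObjective, mul_sub]
  ring

lemma entropicCost_sub_dualObjective_of_isComplementaryMultiplier (hε : ε ≠ 0)
    (hrow : ∀ i, ∑ j, P i j = a i) (hgh : IsComplementaryMultiplier P bd bu g h) :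
    entropicCost C ε P - dualObjective C ε a bd bu f g h =
      ε * ∑ i, ∑ j, fenchelGap (P i j) ((f i + g j + h j - C i j) / ε) := by
  simp [entropicCost_sub_dualObjective hε hrow, fun j => (hgh j).2.2.1, fun j => (hgh j).2.2.2]

lemma dualObjective_le_entropicCost (hε : 0 < ε) (hP : P ∈ dbCouplings a bd bu)
    (hg : ∀ j, 0 ≤ g j) (hh : ∀ j, h j ≤ 0) :
    dualObjective C ε a bd bu f g h ≤ entropicCost C ε P := by
  have hgap := entropicCost_sub_dualObjective (C := C) (bd := bd) (bu := bu) hε.ne' hP.2.1 f g h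
  have h₁ : 0 ≤ ε * ∑ i, ∑ j, fenchelGap (P i j) ((f i + g j + h j - C i j) / ε) :=
    mul_nonneg hε.le (sum_nonneg fun i _ => sum_nonneg fun j _ => fenchelGap_nonneg _ (hP.1 i j))
  have h₂ : 0 ≤ ∑ j, g j * (∑ i, P i j - bd j) :=
    sum_nonneg fun j _ => mul_nonneg (hg j) (sub_nonneg.2 (hP.2.2.1 j))
  have h₃ : 0 ≤ ∑ j, h j * (∑ i, P i j - bu j) :=
    sum_nonneg fun j _ => mul_nonneg_of_nonpos_of_nonpos (hh j) (sub_nonpos.2 (hP.2.2.2 j))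
  linarith

lemma entropicCost_sub_dualObjective_add_smul (hε : 0 < ε) (hP : P ∈ dbCouplings a bd bu)
    {φ : ι → ℝ} {γ η : κ → ℝ} (hgh : IsComplementaryMultiplier P bd bu g h)
    (hfgh : ∀ i j, 0 < P i j → f i + g j + h j = entropicCostGrad C ε P i j)
    (hγη : IsComplementaryMultiplier P bd bu γ η)
    (hrec : ∀ i j, φ i + γ j + η j = if 0 < P i j then 0 else -1) {T : ℝ} (hT : 0 ≤ T) :
    entropicCost C ε P - dualObjective C ε a bd bu (f + T • φ) (g + T • γ) (h + T • η) =
      exp (-T / ε) * (entropicCost C ε P - dualObjective C ε a bd bu f g h) := by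
  rw [entropicCost_sub_dualObjective_of_isComplementaryMultiplier hε.ne' hP.2.1
      (hgh.add_smul hγη hT),
    entropicCost_sub_dualObjective_of_isComplementaryMultiplier hε.ne' hP.2.1 hgh]
  have hentry : ∀ i j,
      fenchelGap (P i j) (((f + T • φ) i + (g + T • γ) j + (h + T • η) j - C i j) / ε) =
        exp (-T / ε) * fenchelGap (P i j) ((f i + g j + h j - C i j) / ε) := by
    intro i j
    have hθ : ((f + T • φ) i + (g + T • γ) j + (h + T • η) j - C i j) / ε =
        (f i + g j + h j - C i j) / ε + T * (φ i + γ j + η j) / ε := by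
      simp only [Pi.add_apply, Pi.smul_apply, smul_eq_mul]
      ring
    rw [hθ, hrec]
    split_ifs with hij
    · have hlog : (f i + g j + h j - C i j) / ε = log (P i j) := by
        rw [hfgh i j hij, entropicCostGrad]
        field_simp
        ring
      simp [hlog, fenchelGap_log hij]
    · have hP₀ : P i j = 0 := le_antisymm (not_lt.1 hij) (hP.1 i j)
      rw [hP₀, fenchelGap_zero, fenchelGap_zero, ← exp_add]
      ring_nf
  simp only [hentry, ← mul_sum]
  ring

lemma isLUB_dualObjective (hε : 0 < ε) (hP : P ∈ dbCouplings a bd bu) {φ : ι → ℝ}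
    {γ η : κ → ℝ} (hgh : IsComplementaryMultiplier P bd bu g h)
    (hfgh : ∀ i j, 0 < P i j → f i + g j + h j = entropicCostGrad C ε P i j)
    (hγη : IsComplementaryMultiplier P bd bu γ η)
    (hrec : ∀ i j, φ i + γ j + η j = if 0 < P i j then 0 else -1) :
    IsLUB {y | ∃ (f : ι → ℝ) (g h : κ → ℝ), (∀ j, 0 ≤ g j) ∧ (∀ j, h j ≤ 0) ∧
      y = dualObjective C ε a bd bu f g h} (entropicCost C ε P) := by
  refine isLUB_of_mem_closure ?_ ?_
  · rintro _ ⟨f, g, h, hg, hh, rfl⟩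
    exact dualObjective_le_entropicCost hε hP hg hh
  have hlim : Tendsto (fun T => entropicCost C ε P -
      exp (-T / ε) * (entropicCost C ε P - dualObjective C ε a bd bu f g h)) atTop
      (𝓝 (entropicCost C ε P)) := by
    simpa using tendsto_const_nhds.sub ((tendsto_exp_atBot.comp
      (tendsto_neg_atTop_atBot.atBot_div_const hε)).mul_const _)
  refine mem_closure_of_tendsto
    (f := fun T => dualObjective C ε a bd bu (f + T • φ) (g + T • γ) (h + T • η))
    (hlim.congr' ?_) ?_
  · filter_upwards [eventually_ge_atTop 0] with T hT
    linarith [entropicCost_sub_dualObjective_add_smul hε hP hgh hfgh hγη hrec hT]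
  · filter_upwards [eventually_ge_atTop 0] with T hT
    exact ⟨_, _, _, fun j => (hgh.add_smul hγη hT j).1, fun j => (hgh.add_smul hγη hT j).2.1, rfl⟩

end Duality

end EntropicOT

end

open EntropicOT

theorem dbot_strong_duality_general
    (m n : ℕ)
    (C : Matrix (Fin m) (Fin n) ℝ) (ε : ℝ) (hε : 0 < ε)
    (K : Matrix (Fin m) (Fin n) ℝ)
    (hK : ∀ i j, K i j = Real.exp (-(C i j) / ε))
    (a : Fin m → ℝ) (ha : ∀ i, 0 < a i)
    (bd bu : Fin n → ℝ)
    (S : Set (Matrix (Fin m) (Fin n) ℝ))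
    (hS : S = {P | (∀ i j, 0 ≤ P i j) ∧ (∀ i, ∑ j, P i j = a i) ∧
            (∀ j, bd j ≤ ∑ i, P i j) ∧ (∀ j, ∑ i, P i j ≤ bu j)})
    (hne : S.Nonempty) :
    ∃ Pstar ∈ S,
      IsMinOn (fun P : Matrix (Fin m) (Fin n) ℝ =>
          (∑ i, ∑ j, C i j * P i j) -
            ε * (-(∑ i, ∑ j, P i j * (Real.log (P i j) - 1)))) S Pstar ∧
      (∑ i, ∑ j, C i j * Pstar i j) -
          ε * (-(∑ i, ∑ j, Pstar i j * (Real.log (Pstar i j) - 1)))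
        = sSup {y : ℝ | ∃ (f : Fin m → ℝ) (g h : Fin n → ℝ),
            (∀ j, 0 ≤ g j) ∧ (∀ j, h j ≤ 0) ∧
            y = (∑ i, f i * a i) + (∑ j, g j * bd j) + (∑ j, h j * bu j)
                - ε * ∑ i, ∑ j,
                    Real.exp (f i / ε) * K i j * Real.exp ((g j + h j) / ε)} := by
  subst hS
  obtain ⟨P, hP, hmin⟩ :=
    isCompact_dbCouplings.exists_isMinOn hne (continuous_entropicCost C ε).continuousOn
  obtain ⟨f, g, h, hgh, hfgh⟩ := exists_complementaryMultiplier_of_isMinOn hε ha hP hmin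
  obtain ⟨φ, γ, η, hγη, hrec⟩ := exists_recession_of_isMinOn hε ha hP hmin
  refine ⟨P, hP, hmin, ?_⟩
  simp only [hK]
  exact ((isLUB_dualObjective hε hP hgh hfgh hγη hrec).csSup_eq
    ⟨_, 0, 0, 0, fun _ => le_rfl, fun _ => le_rfl, rfl⟩).symm

/-- strong duality for entropic DB-OT — the minimum of the primal
objective over the double-bounded coupling set equals the supremum of the dual
functional L(f,g,h) over f ∈ ℝ^m, g ≥ 0, h ≤ 0. -/
theorem dbot_strong_duality
    (m n : ℕ) (hm : 0 < m) (hn : 0 < n)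
    (C : Matrix (Fin m) (Fin n) ℝ) (ε : ℝ) (hε : 0 < ε)
    (K : Matrix (Fin m) (Fin n) ℝ)
    (hK : ∀ i j, K i j = Real.exp (-(C i j) / ε))
    (a : Fin m → ℝ) (ha : ∀ i, 0 < a i)
    (bd bu : Fin n → ℝ) (hbd : ∀ j, 0 ≤ bd j) (hdu : ∀ j, bd j ≤ bu j)
    (S : Set (Matrix (Fin m) (Fin n) ℝ))
    (hS : S = {P | (∀ i j, 0 ≤ P i j) ∧ (∀ i, ∑ j, P i j = a i) ∧
            (∀ j, bd j ≤ ∑ i, P i j) ∧ (∀ j, ∑ i, P i j ≤ bu j)})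
    (hne : S.Nonempty) :
    ∃ Pstar ∈ S,
      IsMinOn (fun P : Matrix (Fin m) (Fin n) ℝ =>
          (∑ i, ∑ j, C i j * P i j) -
            ε * (-(∑ i, ∑ j, P i j * (Real.log (P i j) - 1)))) S Pstar ∧
      (∑ i, ∑ j, C i j * Pstar i j) -
          ε * (-(∑ i, ∑ j, Pstar i j * (Real.log (Pstar i j) - 1)))
        = sSup {y : ℝ | ∃ (f : Fin m → ℝ) (g h : Fin n → ℝ),
            (∀ j, 0 ≤ g j) ∧ (∀ j, h j ≤ 0) ∧
            y = (∑ i, f i * a i) + (∑ j, g j * bd j) + (∑ j, h j * bu j)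
                - ε * ∑ i, ∑ j,
                    Real.exp (f i / ε) * K i j * Real.exp ((g j + h j) / ε)} :=
  dbot_strong_duality_general m n C ε hε K hK a ha bd bu S hS hne
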